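/- Let P be a concave lattice path of degree d for h starting at (0,y), and let a(P) denote the area of the region bounded by P, the horizontal segment from (0,y) to (d,y), and the vertical segment from (d,y) to (d,y+V), where V is the vertical displacement of P (equivalently, a(P) = ∫₀^d (g_P(x) − y) dx, where g_P : [0,d] → ℝ is the piecewise linear function whose graph is P). Then A(P)/d − (a(P) + d·y)/d² ≤ I/4. -/

import Mathlib

open Set Finset

noncomputable section

/-- A concave lattice path of degree `d` (with slopes between `0` and `κ`): a starting
height `y ∈ ℤ` together with edge vectors `v_i = m_i • (q_i, p_i)`, `i = 0, …, n`, where the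
`m_i` are positive integers, `p_i ≥ 0` and `q_i ≥ 1` are coprime, the slopes `p_i / q_i`
are strictly increasing, the last slope is at most `κ`, and the total horizontal
displacement is `∑ m_i q_i = d`. -/
structure ConcavePath (κ : ℕ) (d : ℕ) where
  y : ℤ
  n : ℕ
  m : Fin (n + 1) → ℕ
  q : Fin (n + 1) → ℕ
  p : Fin (n + 1) → ℕ
  m_pos : ∀ i, 0 < m i
  q_pos : ∀ i, 0 < q i
  coprime : ∀ i, Nat.Coprime (p i) (q i)
  slope_strictMono : ∀ i j : Fin (n + 1), i < j → p i * q j < p j * q i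
  slope_le : p (Fin.last n) ≤ κ * q (Fin.last n)
  degree : ∑ i, m i * q i = d

namespace ConcavePath

variable {κ d : ℕ}

/-- The vertical displacement `V = ∑ m_i p_i` of a concave lattice path. -/
def V (P : ConcavePath κ d) : ℕ := ∑ i, P.m i * P.p i

/-- The action `A(P) = y + ∑ (m_i / 2) (p_i (1 - z_i) + q_i h(z_i))`, computed with respect
to a choice `z` of points with `h'(z_i) = p_i / q_i`. -/
def action (P : ConcavePath κ d) (h : ℝ → ℝ) (z : Fin (P.n + 1) → ℝ) : ℝ :=
  (P.y : ℝ) + ∑ i, (P.m i : ℝ) / 2 * ((P.p i : ℝ) * (1 - z i) + (P.q i : ℝ) * h (z i))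

end ConcavePath

/-- The region `Ω = {(z, w) : -1 ≤ z ≤ 1, h(z) ≤ w ≤ h(1)}`. -/
def Omega (h : ℝ → ℝ) : Set (ℝ × ℝ) :=
  {w : ℝ × ℝ | -1 ≤ w.1 ∧ w.1 ≤ 1 ∧ h w.1 ≤ w.2 ∧ w.2 ≤ h 1}

/-- The dual norm `‖v‖*_Ω = max {v ⬝ w : w ∈ Ω}`. -/
def dualNorm (Ω : Set (ℝ × ℝ)) (v : ℝ × ℝ) : ℝ :=
  sSup ((fun w : ℝ × ℝ => v.1 * w.1 + v.2 * w.2) '' Ω)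

namespace ConcavePath

variable {κ d : ℕ}

/-- The `x`-coordinate of the left endpoint of the `i`-th edge of the path. -/
def Xc (P : ConcavePath κ d) (i : Fin (P.n + 1)) : ℕ := ∑ j ∈ Finset.Iio i, P.m j * P.q j

/-- The `y`-coordinate of the left endpoint of the `i`-th edge of the path. -/
def Yc (P : ConcavePath κ d) (i : Fin (P.n + 1)) : ℤ :=
  P.y + ∑ j ∈ Finset.Iio i, (P.m j * P.p j : ℤ)

/-- The piecewise linear function `g_P : [0, d] → ℝ` whose graph is the path `P`.  Since
the slopes of the edges are strictly increasing, `g_P` is convex and is hence equal to the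
maximum of the affine functions extending its linear pieces. -/
def gfun (P : ConcavePath κ d) (x : ℝ) : ℝ :=
  Finset.univ.sup' Finset.univ_nonempty fun i : Fin (P.n + 1) =>
    (P.Yc i : ℝ) + (P.p i : ℝ) / (P.q i : ℝ) * (x - (P.Xc i : ℝ))

end ConcavePath



section AuxCP

variable {h : ℝ → ℝ}

lemma auxCP_convexOn (hsm : ContDiff ℝ (⊤ : ℕ∞) h)
    (hconv : ∀ z ∈ Icc (-1:ℝ) 1, 0 ≤ deriv (deriv h) z) :
    ConvexOn ℝ (Icc (-1:ℝ) 1) h := by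
  have hsm' : ContDiff ℝ ((⊤:ℕ∞) : WithTop ℕ∞) h := hsm.of_le (by simp)
  apply convexOn_of_deriv2_nonneg (convex_Icc _ _) hsm.continuous.continuousOn
    (hsm.differentiable (by simp)).differentiableOn
  · have : ContDiff ℝ ((⊤:ℕ∞) : WithTop ℕ∞) (deriv h) := (contDiff_infty_iff_deriv.mp hsm').2
    exact (this.differentiable (by simp)).differentiableOn
  · intro x hx
    have : deriv^[2] h x = deriv (deriv h) x := rfl
    rw [this]
    exact hconv x (interior_subset (s := Icc (-1:ℝ) 1) hx)

lemma auxCP_tangent (hsm : ContDiff ℝ (⊤ : ℕ∞) h)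
    (hconv : ∀ z ∈ Icc (-1:ℝ) 1, 0 ≤ deriv (deriv h) z)
    {zc w : ℝ} (hzc : zc ∈ Icc (-1:ℝ) 1) (hw : w ∈ Icc (-1:ℝ) 1) :
    h zc + deriv h zc * (w - zc) ≤ h w := by
  have hcx := auxCP_convexOn hsm hconv
  have hdiff : DifferentiableAt ℝ h zc := (hsm.differentiable (by simp)).differentiableAt
  rcases lt_trichotomy zc w with hlt | rfl | hlt
  · have := hcx.deriv_le_slope hzc hw hlt hdiff
    rw [slope_def_field, le_div_iff₀ (by linarith)] at this
    linarith
  · simp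
  · have := hcx.slope_le_deriv hw hzc hlt hdiff
    rw [slope_def_field, div_le_iff₀ (by linarith)] at this
    linarith

lemma auxCP_integral_affine (c sl a b : ℝ) :
    ∫ x in a..b, (c + sl * (x - a)) = c * (b - a) + sl * (b - a)^2 / 2 := by
  have h1 : IntervalIntegrable (fun _ : ℝ => c) MeasureTheory.volume a b :=
    intervalIntegrable_const
  have h2 : IntervalIntegrable (fun x : ℝ => sl * (x - a)) MeasureTheory.volume a b :=
    ((continuous_const.mul (continuous_id.sub continuous_const))).intervalIntegrable _ _
  rw [intervalIntegral.integral_add h1 h2, intervalIntegral.integral_const]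
  have h3 : ∫ x in a..b, sl * (x - a) = sl * ((b^2 - a^2)/2 - (b - a) * a) := by
    rw [intervalIntegral.integral_const_mul, intervalIntegral.integral_sub
      intervalIntegral.intervalIntegrable_id intervalIntegrable_const,
      integral_id, intervalIntegral.integral_const, smul_eq_mul]
  rw [h3, smul_eq_mul]; ring

lemma auxCP_midpoint (hsm : ContDiff ℝ (⊤ : ℕ∞) h)
    (hconv : ∀ z ∈ Icc (-1:ℝ) 1, 0 ≤ deriv (deriv h) z)
    {a b : ℝ} (ha : -1 ≤ a) (hb : b ≤ 1) (hab : a ≤ b) :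
    (b - a) * h ((a + b)/2) ≤ ∫ x in a..b, h x := by
  set m := (a + b)/2 with hm
  have hmm : m ∈ Icc (-1:ℝ) 1 := ⟨by rw [hm]; linarith, by rw [hm]; linarith⟩
  have hlin : ∫ x in a..b, (h m + deriv h m * (x - m)) = (b - a) * h m := by
    have e : ∀ x : ℝ, h m + deriv h m * (x - m)
        = (h m + deriv h m * (a - m)) + deriv h m * (x - a) := fun x => by ring
    rw [show (fun x => h m + deriv h m * (x - m))
        = fun x => (h m + deriv h m * (a - m)) + deriv h m * (x - a) from funext e]
    rw [auxCP_integral_affine, hm]; ring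
  have hint1 : IntervalIntegrable h MeasureTheory.volume a b :=
    hsm.continuous.intervalIntegrable _ _
  have hint2 : IntervalIntegrable (fun x => h m + deriv h m * (x - m))
      MeasureTheory.volume a b :=
    (continuous_const.add (continuous_const.mul (continuous_id.sub
      continuous_const))).intervalIntegrable _ _
  have h0 : 0 ≤ ∫ x in a..b, (h x - (h m + deriv h m * (x - m))) := by
    apply intervalIntegral.integral_nonneg hab
    intro x hx
    have hxm : x ∈ Icc (-1:ℝ) 1 := ⟨le_trans ha hx.1, le_trans hx.2 hb⟩
    have := auxCP_tangent hsm hconv hmm hxm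
    linarith
  rw [intervalIntegral.integral_sub hint1 hint2, hlin] at h0
  linarith

lemma auxCP_abel (a b : ℕ → ℝ) (N : ℕ) :
    ∑ i ∈ range N, a i * (∑ j ∈ range i, b j)
      + ∑ i ∈ range N, b i * (∑ j ∈ range (i+1), a j)
    = (∑ i ∈ range N, a i) * (∑ i ∈ range N, b i) := by
  induction N with
  | zero => simp
  | succ N ih =>
    rw [Finset.sum_range_succ (f := fun i => a i * (∑ j ∈ range i, b j)),
      Finset.sum_range_succ (f := fun i => b i * (∑ j ∈ range (i+1), a j)),
      Finset.sum_range_succ (f := a), Finset.sum_range_succ (f := b)]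
    linear_combination ih

end AuxCP

section AuxCP2

variable {h : ℝ → ℝ}

lemma auxCP_algebra (N : ℕ) (t s zz H : ℕ → ℝ) (hsum : ∑ i ∈ range N, t i = 1) :
    ∑ i ∈ range N, (t i / 2 * (s i * (1 - zz i) + H i))
      - ∑ i ∈ range N, (t i * (∑ j ∈ range i, s j * t j) + s i * t i^2 / 2)
    = (1/2) * ∑ i ∈ range N, t i * (H i + s i * (2 * (∑ j ∈ range i, t j) + t i - 1 - zz i)) := by
  have habel := auxCP_abel t (fun i => s i * t i) N
  rw [hsum, one_mul] at habel
  rw [Finset.mul_sum, ← sub_eq_zero, ← Finset.sum_sub_distrib, ← Finset.sum_sub_distrib]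
  have e : ∀ i ∈ range N,
      (t i / 2 * (s i * (1 - zz i) + H i)
        - (t i * (∑ j ∈ range i, s j * t j) + s i * t i^2 / 2)
        - 1/2 * (t i * (H i + s i * (2 * (∑ j ∈ range i, t j) + t i - 1 - zz i))))
      = s i * t i - (s i * t i) * (∑ j ∈ range (i+1), t j)
          - t i * (∑ j ∈ range i, s j * t j) := by
    intro i _
    rw [Finset.sum_range_succ]
    ring
  rw [Finset.sum_congr rfl e]
  have : ∑ i ∈ range N, (s i * t i - (s i * t i) * (∑ j ∈ range (i+1), t j)
      - t i * (∑ j ∈ range i, s j * t j))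
      = ∑ i ∈ range N, s i * t i
        - ∑ i ∈ range N, (s i * t i) * (∑ j ∈ range (i+1), t j)
        - ∑ i ∈ range N, t i * (∑ j ∈ range i, s j * t j) := by
    rw [← Finset.sum_sub_distrib, ← Finset.sum_sub_distrib]
  rw [this]
  linarith [habel]

lemma auxCP_core (hsm : ContDiff ℝ (⊤ : ℕ∞) h)
    (hconv : ∀ z ∈ Icc (-1:ℝ) 1, 0 ≤ deriv (deriv h) z)
    (n : ℕ) (t s zz : ℕ → ℝ)
    (ht : ∀ i, 0 ≤ t i) (hsum : ∑ i ∈ range (n+1), t i = 1)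
    (hzm : ∀ i < n+1, zz i ∈ Icc (-1:ℝ) 1)
    (hs : ∀ i < n+1, deriv h (zz i) = s i) :
    ∑ i ∈ range (n+1), t i * (h (zz i) + s i * (2 * (∑ j ∈ range i, t j) + t i - 1 - zz i))
      ≤ (∫ w in (-1:ℝ)..1, h w) / 2 := by
  obtain ⟨U, hU⟩ : ∃ U : ℕ → ℝ, ∀ k, U k = 2 * (∑ j ∈ range k, t j) - 1 :=
    ⟨_, fun k => rfl⟩
  have hU0 : U 0 = -1 := by simp [hU]
  have hUlast : U (n+1) = 1 := by rw [hU, hsum]; norm_num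
  have hUmono : ∀ k l, k ≤ l → U k ≤ U l := by
    intro k l hkl
    have : ∑ j ∈ range k, t j ≤ ∑ j ∈ range l, t j :=
      Finset.sum_le_sum_of_subset_of_nonneg (Finset.range_subset_range.2 hkl)
        (fun j _ _ => ht j)
    rw [hU k, hU l]; linarith
  have hUmem : ∀ k, k ≤ n+1 → U k ∈ Icc (-1:ℝ) 1 := fun k hk =>
    ⟨hU0 ▸ hUmono 0 k (Nat.zero_le _), hUlast ▸ hUmono k (n+1) hk⟩
  have hstep : ∀ i, U (i+1) = U i + 2 * t i := by
    intro i; rw [hU (i+1), hU i, Finset.sum_range_succ]; ring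
  have key : ∀ i ∈ range (n+1),
      t i * (h (zz i) + s i * (2 * (∑ j ∈ range i, t j) + t i - 1 - zz i))
        ≤ (∫ x in U i..U (i+1), h x) / 2 := by
    intro i hi
    rw [Finset.mem_range] at hi
    have hUi := hUmem i (by omega)
    have hUi1 := hUmem (i+1) (by omega)
    have hwv : (U i + U (i+1))/2 = 2 * (∑ j ∈ range i, t j) + t i - 1 := by
      rw [hstep i, hU i]; ring
    have hwmem : (U i + U (i+1))/2 ∈ Icc (-1:ℝ) 1 :=
      ⟨by have := hUi.1; have := hUi1.1; linarith, by have := hUi.2; have := hUi1.2; linarith⟩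
    have htan : h (zz i) + s i * ((U i + U (i+1))/2 - zz i) ≤ h ((U i + U (i+1))/2) := by
      rw [← hs i hi]
      exact auxCP_tangent hsm hconv (hzm i hi) hwmem
    have hmid := auxCP_midpoint hsm hconv hUi.1 hUi1.2 (hUmono i (i+1) (by omega))
    calc t i * (h (zz i) + s i * (2 * (∑ j ∈ range i, t j) + t i - 1 - zz i))
        = t i * (h (zz i) + s i * ((U i + U (i+1))/2 - zz i)) := by rw [hwv]
      _ ≤ t i * h ((U i + U (i+1))/2) := mul_le_mul_of_nonneg_left htan (ht i)
      _ ≤ (∫ x in U i..U (i+1), h x) / 2 := by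
          rw [show U (i+1) - U i = 2 * t i by rw [hstep i]; ring] at hmid
          linarith
  calc ∑ i ∈ range (n+1), t i * (h (zz i) + s i * (2 * (∑ j ∈ range i, t j) + t i - 1 - zz i))
      ≤ ∑ i ∈ range (n+1), (∫ x in U i..U (i+1), h x) / 2 := Finset.sum_le_sum key
    _ = (∑ i ∈ range (n+1), ∫ x in U i..U (i+1), h x) / 2 := by rw [Finset.sum_div]
    _ = (∫ x in (U 0)..(U (n+1)), h x) / 2 := by
        rw [intervalIntegral.sum_integral_adjacent_intervals
          (fun k _ => hsm.continuous.intervalIntegrable _ _)]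
    _ = (∫ w in (-1:ℝ)..1, h w) / 2 := by rw [hU0, hUlast]

end AuxCP2

lemma auxCP_affine_le (n : ℕ) (L s : ℕ → ℝ) (hL : ∀ r, 0 ≤ L r)
    (hs0 : ∀ r, 0 ≤ s r)
    (hsm : ∀ r r', r ≤ r' → r' < n+1 → s r ≤ s r')
    (j i : ℕ) (hj : j < n+1) (hi : i < n+1) (x : ℝ)
    (hx1 : ∑ r ∈ range i, L r ≤ x) (hx2 : x ≤ ∑ r ∈ range (i+1), L r) :
    (∑ r ∈ range j, s r * L r) + s j * (x - ∑ r ∈ range j, L r)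
      ≤ (∑ r ∈ range i, s r * L r) + s i * (x - ∑ r ∈ range i, L r) := by
  rcases le_or_gt j i with hji | hij
  · have hsumY : ∑ r ∈ Finset.Ico j i, s r * L r
        = ∑ r ∈ range i, s r * L r - ∑ r ∈ range j, s r * L r :=
      Finset.sum_Ico_eq_sub _ hji
    have hsumL : ∑ r ∈ Finset.Ico j i, L r
        = ∑ r ∈ range i, L r - ∑ r ∈ range j, L r :=
      Finset.sum_Ico_eq_sub _ hji
    have h1 : s j * (∑ r ∈ Finset.Ico j i, L r) ≤ ∑ r ∈ Finset.Ico j i, s r * L r := by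
      rw [Finset.mul_sum]
      apply Finset.sum_le_sum
      intro r hr
      obtain ⟨hr1, hr2⟩ := Finset.mem_Ico.1 hr
      exact mul_le_mul_of_nonneg_right (hsm j r hr1 (by omega)) (hL r)
    have h2 : s j * (x - ∑ r ∈ range i, L r) ≤ s i * (x - ∑ r ∈ range i, L r) :=
      mul_le_mul_of_nonneg_right (hsm j i hji hi) (by linarith)
    have e1 : s j * (x - ∑ r ∈ range j, L r)
        = s j * (x - ∑ r ∈ range i, L r) + s j * (∑ r ∈ Finset.Ico j i, L r) := by
      rw [hsumL]; ring
    rw [hsumY] at h1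
    linarith
  · -- i < j
    have hij' : i + 1 ≤ j := hij
    have hsumY : ∑ r ∈ Finset.Ico i j, s r * L r
        = ∑ r ∈ range j, s r * L r - ∑ r ∈ range i, s r * L r :=
      Finset.sum_Ico_eq_sub _ (le_of_lt hij)
    have hsplit : ∑ r ∈ Finset.Ico i j, s r * L r
        = s i * L i + ∑ r ∈ Finset.Ico (i+1) j, s r * L r :=
      Finset.sum_eq_sum_Ico_succ_bot hij _
    have hsumL : ∑ r ∈ Finset.Ico (i+1) j, L r
        = ∑ r ∈ range j, L r - ∑ r ∈ range (i+1), L r :=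
      Finset.sum_Ico_eq_sub _ hij'
    have h1 : ∑ r ∈ Finset.Ico (i+1) j, s r * L r
        ≤ s j * (∑ r ∈ Finset.Ico (i+1) j, L r) := by
      rw [Finset.mul_sum]
      apply Finset.sum_le_sum
      intro r hr
      obtain ⟨hr1, hr2⟩ := Finset.mem_Ico.1 hr
      exact mul_le_mul_of_nonneg_right (hsm r j (le_of_lt hr2) hj) (hL r)
    have h2 : s i * (∑ r ∈ range (i+1), L r - x) ≤ s j * (∑ r ∈ range (i+1), L r - x) :=
      mul_le_mul_of_nonneg_right (hsm i j (le_of_lt hij) hj) (by linarith)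
    have hLi : ∑ r ∈ range (i+1), L r = ∑ r ∈ range i, L r + L i := Finset.sum_range_succ _ _
    have h3 : s j * (∑ r ∈ Finset.Ico (i+1) j, L r)
        = s j * (∑ r ∈ range j, L r) - s j * (∑ r ∈ range (i+1), L r) := by
      rw [hsumL]; ring
    have h4 : s i * (x - ∑ r ∈ range i, L r)
        = s i * (x - ∑ r ∈ range (i+1), L r) + s i * L i := by
      rw [hLi]; ring
    have h5 : s j * (x - ∑ r ∈ range j, L r)
        = s j * (x - ∑ r ∈ range (i+1), L r)
          - (s j * (∑ r ∈ range j, L r) - s j * (∑ r ∈ range (i+1), L r)) := by ring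
    linarith [h1, h2, hsumY, hsplit, h3, h4, h5]

section Bridge

lemma auxCP_fin_sum {M : Type*} [AddCommMonoid M] {n : ℕ} (g : ℕ → M)
    (gF : Fin (n+1) → M) (hg : ∀ i : Fin (n+1), g i.val = gF i) :
    ∑ i : Fin (n+1), gF i = ∑ k ∈ range (n+1), g k := by
  rw [← Fin.sum_univ_eq_sum_range g (n+1)]
  exact Finset.sum_congr rfl (fun i _ => (hg i).symm)

lemma auxCP_fin_sum_Iio {M : Type*} [AddCommMonoid M] {n : ℕ} (g : ℕ → M)
    (gF : Fin (n+1) → M) (hg : ∀ i : Fin (n+1), g i.val = gF i) (i : Fin (n+1)) :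
    ∑ j ∈ Finset.Iio i, gF j = ∑ k ∈ range i.val, g k := by
  have h1 : ∑ k ∈ (Finset.Iio i).map Fin.valEmbedding, g k
      = ∑ j ∈ Finset.Iio i, g (Fin.valEmbedding j) := Finset.sum_map _ _ _
  rw [Fin.map_valEmbedding_Iio] at h1
  calc ∑ j ∈ Finset.Iio i, gF j = ∑ j ∈ Finset.Iio i, g j.val :=
        Finset.sum_congr rfl (fun j _ => (hg j).symm)
    _ = ∑ k ∈ range i.val, g k := by
        rw [Nat.Iio_eq_range] at h1; exact h1.symm

end Bridge

/-- The action bound `A(P)/d - (a(P) + d y)/d² ≤ I/4`, where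
`a(P) = ∫₀^d (g_P(x) - y) dx` and `I = ∫_{-1}^1 h(z) dz`. -/
theorem concavePath_action_upper_bound (h : ℝ → ℝ) (hsm : ContDiff ℝ (⊤ : ℕ∞) h)
    (h1 : h (-1) = 0) (h2 : deriv h (-1) = 0)
    (hmono : ∀ z ∈ Icc (-1:ℝ) 1, 0 ≤ deriv h z)
    (hconv : ∀ z ∈ Icc (-1:ℝ) 1, 0 ≤ deriv (deriv h) z)
    (κ : ℕ) (hκ : 0 < κ) (hκ' : deriv h 1 = (κ : ℝ))
    (d : ℕ) (hd : 0 < d) (P : ConcavePath κ d)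
    (z : Fin (P.n + 1) → ℝ)
    (hz : ∀ i, z i ∈ Icc (-1:ℝ) 1)
    (hz' : ∀ i, deriv h (z i) = (P.p i : ℝ) / (P.q i : ℝ)) :
    P.action h z / (d : ℝ)
        - ((∫ x in (0:ℝ)..(d : ℝ), (P.gfun x - (P.y : ℝ))) + (d : ℝ) * (P.y : ℝ))
          / (d : ℝ) ^ 2
      ≤ (∫ w in (-1:ℝ)..1, h w) / 4 := by
  have hdR : (0:ℝ) < d := by exact_mod_cast hd
  have hqR : ∀ i : Fin (P.n+1), (0:ℝ) < (P.q i : ℝ) := fun i => by exact_mod_cast P.q_pos i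
  -- ℕ-indexed data
  obtain ⟨F, hFv⟩ : ∃ F : ℕ → Fin (P.n+1), ∀ k, F k = ⟨min k P.n, by omega⟩ :=
    ⟨_, fun k => rfl⟩
  have hFi : ∀ i : Fin (P.n+1), F i.val = i := by
    intro i
    rw [hFv]
    exact Fin.ext (by simp [Nat.min_eq_left (Nat.lt_succ_iff.mp i.isLt)])
  have hFk : ∀ k, k < P.n + 1 → (F k : ℕ) = k := by
    intro k hk; rw [hFv]; simp [Nat.min_eq_left (by omega : k ≤ P.n)]
  obtain ⟨sN, hsN⟩ : ∃ f : ℕ → ℝ, ∀ k, f k = (P.p (F k) : ℝ) / (P.q (F k)) :=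
    ⟨_, fun k => rfl⟩
  obtain ⟨LN, hLN⟩ : ∃ f : ℕ → ℝ, ∀ k, f k = (P.m (F k) : ℝ) * (P.q (F k)) :=
    ⟨_, fun k => rfl⟩
  obtain ⟨zN, hzNd⟩ : ∃ f : ℕ → ℝ, ∀ k, f k = z (F k) := ⟨_, fun k => rfl⟩
  have hsN0 : ∀ k, 0 ≤ sN k := fun k => by
    rw [hsN]; positivity
  have hLN0 : ∀ k, 0 ≤ LN k := fun k => by
    rw [hLN]; positivity
  -- monotonicity of slopes
  have hsmono : ∀ r r', r ≤ r' → r' < P.n + 1 → sN r ≤ sN r' := by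
    intro r r' hrr hr'
    rcases eq_or_lt_of_le hrr with rfl | hlt
    · exact le_rfl
    have hr : r < P.n + 1 := by omega
    have hFlt : F r < F r' := by
      rw [Fin.lt_def, hFk r hr, hFk r' hr']; exact hlt
    have hkey := P.slope_strictMono (F r) (F r') hFlt
    rw [hsN, hsN, div_le_div_iff₀ (hqR _) (hqR _)]
    exact_mod_cast le_of_lt hkey
  -- bridges for Xc and Yc
  have hXc : ∀ i : Fin (P.n+1), ((P.Xc i : ℕ) : ℝ) = ∑ r ∈ range i.val, LN r := by
    intro i
    rw [ConcavePath.Xc, Nat.cast_sum]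
    exact (auxCP_fin_sum_Iio LN (fun j => ((P.m j * P.q j : ℕ) : ℝ))
      (fun j => by simp only [hLN, hFi]; push_cast; ring) i)
  have hYc : ∀ i : Fin (P.n+1),
      ((P.Yc i : ℤ) : ℝ) = (P.y : ℝ) + ∑ r ∈ range i.val, sN r * LN r := by
    intro i
    rw [ConcavePath.Yc]
    push_cast
    congr 1
    exact (auxCP_fin_sum_Iio (fun k => sN k * LN k)
      (fun j => ((P.m j : ℝ) * (P.p j : ℝ)))
      (fun j => by
        have hq := (hqR j).ne'
        simp only [hsN, hLN, hFi]
        field_simp) i)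
  -- total length
  have hLsum : ∑ k ∈ range (P.n+1), LN k = (d : ℝ) := by
    rw [← auxCP_fin_sum LN (fun i => ((P.m i * P.q i : ℕ) : ℝ))
      (fun i => by simp only [hLN, hFi]; push_cast; ring)]
    rw [← Nat.cast_sum]
    exact_mod_cast congrArg (Nat.cast : ℕ → ℝ) P.degree
  -- gfun evaluation on each piece
  have hgf : ∀ k, k < P.n + 1 → ∀ x : ℝ,
      (∑ r ∈ range k, LN r) ≤ x → x ≤ (∑ r ∈ range (k+1), LN r) →
      P.gfun x = ((P.y : ℝ) + ∑ r ∈ range k, sN r * LN r) + sN k * (x - ∑ r ∈ range k, LN r) := by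
    intro k hk x hx1 hx2
    rw [ConcavePath.gfun]
    apply le_antisymm
    · apply Finset.sup'_le
      intro i _
      have hcomp := auxCP_affine_le P.n LN sN hLN0 hsN0 hsmono i.val k i.isLt hk x hx1 hx2
      have hsi : (P.p i : ℝ) / (P.q i : ℝ) = sN i.val := by rw [hsN, hFi i]
      rw [hYc i, hXc i, hsi]
      linarith [hcomp]
    · have hb := Finset.le_sup'
        (f := fun i : Fin (P.n+1) =>
          ((P.Yc i : ℤ) : ℝ) + (P.p i : ℝ) / (P.q i : ℝ) * (x - ((P.Xc i : ℕ) : ℝ)))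
        (Finset.mem_univ (⟨k, hk⟩ : Fin (P.n+1)))
      have hsk : (P.p (⟨k, hk⟩ : Fin (P.n+1)) : ℝ) / (P.q (⟨k, hk⟩ : Fin (P.n+1)) : ℝ) = sN k := by
        rw [hsN]
        congr 2 <;> rw [show F k = (⟨k, hk⟩ : Fin (P.n+1)) from Fin.ext (hFk k hk)]
      rw [hYc ⟨k, hk⟩, hXc ⟨k, hk⟩, hsk] at hb
      exact le_of_le_of_eq hb rfl
  -- continuity of gfun
  have hgcont : Continuous P.gfun := by
    rw [continuous_iff_continuousAt]
    intro x
    exact ContinuousAt.finset_sup'_apply Finset.univ_nonempty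
      (fun i _ => (continuous_const.add (continuous_const.mul
        (continuous_id.sub continuous_const))).continuousAt)
  -- the integral of gfun
  have hIg : ∫ x in (0:ℝ)..(d:ℝ), P.gfun x
      = ∑ k ∈ range (P.n+1),
          (LN k * ((P.y : ℝ) + ∑ r ∈ range k, sN r * LN r) + sN k * (LN k)^2 / 2) := by
    have h0 : (0:ℝ) = ∑ r ∈ range 0, LN r := by simp
    have hdd : (d:ℝ) = ∑ r ∈ range (P.n+1), LN r := hLsum.symm
    rw [h0, hdd, ← intervalIntegral.sum_integral_adjacent_intervals
      (a := fun k => ∑ r ∈ range k, LN r)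
      (fun k _ => hgcont.intervalIntegrable _ _)]
    apply Finset.sum_congr rfl
    intro k hk
    rw [Finset.mem_range] at hk
    have hstep : ∑ r ∈ range (k+1), LN r = (∑ r ∈ range k, LN r) + LN k :=
      Finset.sum_range_succ _ _
    have hle : (∑ r ∈ range k, LN r) ≤ ∑ r ∈ range (k+1), LN r := by
      rw [hstep]; linarith [hLN0 k]
    have heq : Set.EqOn P.gfun
        (fun x => ((P.y : ℝ) + ∑ r ∈ range k, sN r * LN r) + sN k * (x - ∑ r ∈ range k, LN r))
        (Set.uIcc (∑ r ∈ range k, LN r) (∑ r ∈ range (k+1), LN r)) := by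
      intro x hx
      rw [Set.uIcc_of_le hle] at hx
      exact hgf k hk x hx.1 hx.2
    rw [intervalIntegral.integral_congr heq, auxCP_integral_affine, hstep]
    ring
  -- action
  have hA : P.action h z
      = (P.y : ℝ) + ∑ k ∈ range (P.n+1), LN k / 2 * (sN k * (1 - zN k) + h (zN k)) := by
    rw [ConcavePath.action]
    congr 1
    exact (auxCP_fin_sum (fun k => LN k / 2 * (sN k * (1 - zN k) + h (zN k)))
      (fun i => (P.m i : ℝ) / 2 * ((P.p i : ℝ) * (1 - z i) + (P.q i : ℝ) * h (z i)))
      (fun i => by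
        simp only [hLN, hsN, hzNd, hFi]
        have := (hqR i).ne'
        field_simp))
  -- rewrite the integral in the goal
  have hsub : ∫ x in (0:ℝ)..(d:ℝ), (P.gfun x - (P.y : ℝ))
      = (∫ x in (0:ℝ)..(d:ℝ), P.gfun x) - (d:ℝ) * (P.y : ℝ) := by
    rw [intervalIntegral.integral_sub (hgcont.intervalIntegrable _ _)
      intervalIntegrable_const, intervalIntegral.integral_const, smul_eq_mul]
    ring
  -- t values
  obtain ⟨t, htd⟩ : ∃ f : ℕ → ℝ, ∀ k, f k = LN k / d := ⟨_, fun k => rfl⟩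
  have ht0 : ∀ k, 0 ≤ t k := fun k => by rw [htd]; exact div_nonneg (hLN0 k) hdR.le
  have htsum : ∑ k ∈ range (P.n+1), t k = 1 := by
    have : ∑ k ∈ range (P.n+1), t k = (∑ k ∈ range (P.n+1), LN k) / d := by
      rw [Finset.sum_div]; exact Finset.sum_congr rfl (fun k _ => htd k)
    rw [this, hLsum]
    field_simp
  -- core inequality
  have hzmem : ∀ k, k < P.n + 1 → zN k ∈ Icc (-1:ℝ) 1 := fun k _ => by
    rw [hzNd]; exact hz _
  have hsder : ∀ k, k < P.n + 1 → deriv h (zN k) = sN k := fun k _ => by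
    rw [hzNd, hsN]; exact hz' _
  have hcore := auxCP_core hsm hconv P.n t sN zN ht0 htsum hzmem hsder
  have halg := auxCP_algebra (P.n+1) t sN zN (fun k => h (zN k)) htsum
  -- express everything over d
  have hAd : (∑ k ∈ range (P.n+1), LN k / 2 * (sN k * (1 - zN k) + h (zN k))) / d
      = ∑ k ∈ range (P.n+1), (t k / 2 * (sN k * (1 - zN k) + h (zN k))) := by
    rw [Finset.sum_div]
    refine Finset.sum_congr rfl (fun k _ => ?_)
    rw [htd]
    ring
  have hBd : (∑ k ∈ range (P.n+1),
        (LN k * ((P.y : ℝ) + ∑ r ∈ range k, sN r * LN r) + sN k * (LN k)^2 / 2)) / (d:ℝ)^2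
      = (P.y : ℝ) / d
        + ∑ k ∈ range (P.n+1), (t k * (∑ j ∈ range k, sN j * t j) + sN k * (t k)^2 / 2) := by
    have hsplit : ∑ k ∈ range (P.n+1),
          (LN k * ((P.y : ℝ) + ∑ r ∈ range k, sN r * LN r) + sN k * (LN k)^2 / 2)
        = (d:ℝ) * (P.y : ℝ)
          + ∑ k ∈ range (P.n+1), (LN k * (∑ r ∈ range k, sN r * LN r) + sN k * (LN k)^2 / 2) := by
      rw [← hLsum, Finset.sum_mul]
      rw [← Finset.sum_add_distrib]
      refine Finset.sum_congr rfl (fun k _ => ?_)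
      ring
    rw [hsplit]
    rw [add_div, Finset.sum_div]
    congr 1
    · rw [sq]
      field_simp
    refine Finset.sum_congr rfl (fun k _ => ?_)
    have hYd : (∑ r ∈ range k, sN r * LN r) / d = ∑ j ∈ range k, sN j * t j := by
      rw [Finset.sum_div]
      refine Finset.sum_congr rfl (fun j _ => ?_)
      rw [htd]
      ring
    rw [← hYd, htd]
    field_simp
  -- final chain
  rw [hA, hsub, hIg]
  have hfinal : ((P.y : ℝ) + ∑ k ∈ range (P.n+1), LN k / 2 * (sN k * (1 - zN k) + h (zN k))) / d
      - ((∑ k ∈ range (P.n+1),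
          (LN k * ((P.y : ℝ) + ∑ r ∈ range k, sN r * LN r) + sN k * (LN k)^2 / 2))
          - (d:ℝ) * (P.y : ℝ) + (d:ℝ) * (P.y : ℝ)) / (d:ℝ)^2
      = (∑ k ∈ range (P.n+1), (t k / 2 * (sN k * (1 - zN k) + h (zN k))))
        - ∑ k ∈ range (P.n+1), (t k * (∑ j ∈ range k, sN j * t j) + sN k * (t k)^2 / 2) := by
    rw [sub_add_cancel, add_div, hAd, hBd]
    ring
  rw [hfinal, halg]
  linarith [hcore]


end
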